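/- Let I be a finite interval Markov chain, α a state label, ~ ∈ {≤, <, >, ≥}, and 0 < q < 1. Then there exists a Markov chain M with M ⊨ᵒ I (once-and-for-all semantics) and P^M(◊α) ~ q if and only if there exists a Markov chain M' with M' ⊨ᵃ I (at-every-step semantics) and P^{M'}(◊α) ~ q. -/

import Mathlib

open Classical

structure MC (S : Type) (A : Type) where
  s0 : S
  p : S → S → ℝ
  nonneg : ∀ s s', 0 ≤ p s s'
  sum_one : ∀ s, ∑ᶠ s', p s s' = 1
  V : S → Set A

namespace MC

variable {S A : Type}

/-- Probability of a finite path (product of transition probabilities). -/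
def pathProb (p : S → S → ℝ) : S → List S → ℝ
  | _, [] => 1
  | s, s' :: l => p s s' * pathProb p s' l

/-- `UntilPath φ ψ s l` : starting from `s`, the (nonempty) suffix `l` first reaches a
`ψ`-state at its last position, with `φ` holding at all strictly earlier positions after
the start. -/
inductive UntilPath (φ ψ : S → Prop) : S → List S → Prop
  | single {s s' : S} (h : ψ s') : UntilPath φ ψ s [s']
  | cons {s s' : S} {l : List S} (hψ : ¬ ψ s') (hφ : φ s') (h : UntilPath φ ψ s' l) :
      UntilPath φ ψ s (s' :: l)

/-- `P_s(φ U ψ)` : first-passage sum over until-paths. -/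
noncomputable def untilProb (p : S → S → ℝ) (φ ψ : S → Prop) (s : S) : ℝ :=
  ∑' l : {l : List S // UntilPath φ ψ s l}, pathProb p s l.1

/-- `P_s(◊ψ)` : probability of eventually reaching a `ψ`-state from `s`. -/
noncomputable def reachProb (p : S → S → ℝ) (ψ : S → Prop) (s : S) : ℝ :=
  if ψ s then 1 else untilProb p (fun _ => True) ψ s

/-- `P^M(◊α)` : probability of eventually reaching a state labeled `α` from the initial
state of `M`. -/
noncomputable def Preach (M : MC S A) (α : Set A) : ℝ :=
  reachProb M.p (fun s => M.V s = α) M.s0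

/-- Reachability via positive-probability transitions. -/
def Reaches (p : S → S → ℝ) : S → S → Prop :=
  Relation.ReflTransGen fun a b => 0 < p a b

end MC

/-- Interval Markov chain: each transition carries an interval `[Plo, Phi] ⊆ [0,1]`. -/
structure IMC (S : Type) (A : Type) where
  s0 : S
  Plo : S → S → ℝ
  Phi : S → S → ℝ
  V : S → Set A

/-- Once-and-for-all satisfaction `M ⊨ᵒ I`. -/
def SatO {S A : Type} (M : MC S A) (I : IMC S A) : Prop :=
  M.s0 = I.s0 ∧ M.V = I.V ∧
    ∀ s, MC.Reaches M.p M.s0 s → ∀ s', M.p s s' ∈ Set.Icc (I.Plo s s') (I.Phi s s')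

/-- `R` is an at-every-step satisfaction relation between `M` and `I`. -/
def IsSatRel {T S A : Type} (M : MC T A) (I : IMC S A) (R : T → S → Prop) : Prop :=
  R M.s0 I.s0 ∧
    ∀ t s, R t s → M.V t = I.V s ∧
      ∃ δ : T → S → ℝ,
        (∀ t' s', 0 ≤ δ t' s') ∧
        (∀ t', 0 < M.p t t' → ∑ᶠ s', δ t' s' = 1) ∧
        (∀ s', (∑ᶠ t', M.p t t' * δ t' s') ∈ Set.Icc (I.Plo s s') (I.Phi s s')) ∧
        (∀ t' s', 0 < δ t' s' → R t' s')

/-- At-every-step satisfaction `M ⊨ᵃ I`. -/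
def SatA {T S A : Type} (M : MC T A) (I : IMC S A) : Prop :=
  ∃ R, IsSatRel M I R

/-- `M` satisfies `I` with degree `n`. -/
def SatADeg {T S A : Type} (n : ℕ) (M : MC T A) (I : IMC S A) : Prop :=
  ∃ R, IsSatRel M I R ∧ ∀ t, {s | R t s}.ncard ≤ n

/-- Combined transition function on the disjoint union of two Markov chains. -/
def sumP {S T A : Type} (M : MC S A) (N : MC T A) : S ⊕ T → S ⊕ T → ℝ
  | .inl a, .inl b => M.p a b
  | .inr a, .inr b => N.p a b
  | _, _ => 0

/-- Combined labelling on the disjoint union. -/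
def sumV {S T A : Type} (M : MC S A) (N : MC T A) : S ⊕ T → Set A :=
  Sum.elim M.V N.V

/-- Probabilistic bisimilarity of two Markov chains. -/
def Bisimilar {S T A : Type} (M : MC S A) (N : MC T A) : Prop :=
  ∃ B : (S ⊕ T) → (S ⊕ T) → Prop,
    Equivalence B ∧ B (Sum.inl M.s0) (Sum.inr N.s0) ∧
    ∀ a b, B a b → sumV M N a = sumV M N b ∧
      ∀ C : Set (S ⊕ T), (∀ x y, B x y → (x ∈ C ↔ y ∈ C)) →
        (∑ᶠ c ∈ C, sumP M N a c) = ∑ᶠ c ∈ C, sumP M N b c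

/-!
An implementation `M ⊨ᵒ I` is also one for `⊨ᵃ`: relate every reachable state to itself.
Conversely, let `R` witness `M' ⊨ᵃ I`. Through its correspondence function every pair `t R s`
induces a distribution on the states of `I` that lies in the intervals at `s`, so choosing one
related `t` for every `s` yields a chain `M ⊨ᵒ I` on the states of `I`. If each chosen `t` has
the least value `P_t(◊α)` among the states related to `s`, then `s ↦ min_{t R s} P_t(◊α)` is
superharmonic for `M`, whence `P^M(◊α) ≤ P^{M'}(◊α)`. If each chosen `t` has the largest value,
and among those moves closer to `α` whenever possible, then `s ↦ max_{t R s} P_t(◊α)` is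
subharmonic for `M` and `α` is reachable from every state where it is positive; on a finite
chain such a function is a lower bound for the reachability probability, whence
`P^{M'}(◊α) ≤ P^M(◊α)`. The first chain serves `≤` and `<`, the second `>` and `≥`.
-/

open Filter Topology

lemma mul_le_mul_of_pos_imp {a b c : ℝ} (ha : 0 ≤ a) (h : 0 < a → b ≤ c) :
    a * b ≤ a * c := by
  rcases ha.eq_or_lt with rfl | ha
  · simp
  · exact mul_le_mul_of_nonneg_left (h ha) ha.le

lemma exists_imp_of_nonempty {α : Type*} [Nonempty α] {p : Prop} {q : α → Prop}
    (h : p → ∃ a, q a) : ∃ a, p → q a := by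
  by_cases hp : p
  · obtain ⟨a, ha⟩ := h hp
    exact ⟨a, fun _ => ha⟩
  · exact ⟨Classical.arbitrary α, fun h => absurd h hp⟩

lemma eq_of_le_sum_mul {ι : Type*} [Fintype ι] {w g : ι → ℝ} {H : ℝ}
    (hw0 : ∀ i, 0 ≤ w i) (hw1 : ∑ i, w i = 1) (hg : ∀ i, 0 < w i → g i ≤ H)
    (hH : H ≤ ∑ i, w i * g i) {i : ι} (hi : 0 < w i) : g i = H := by
  have hle : ∀ j ∈ Finset.univ, w j * g j ≤ w j * H := fun j _ =>
    mul_le_mul_of_pos_imp (hw0 j) (hg j)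
  have heq : ∑ j, w j * g j = ∑ j, w j * H :=
    (Finset.sum_le_sum hle).antisymm (by rwa [← Finset.sum_mul, hw1, one_mul])
  exact mul_left_cancel₀ hi.ne' ((Finset.sum_eq_sum_iff_of_le hle).1 heq i (Finset.mem_univ i))

namespace MC

variable {S A : Type}

lemma not_untilPath_nil {φ ψ : S → Prop} {s : S} : ¬ UntilPath φ ψ s [] := nofun

lemma untilPath_cons_iff {ψ : S → Prop} {s a : S} {l : List S} :
    UntilPath (fun _ => True) ψ s (a :: l) ↔
      ψ a ∧ l = [] ∨ ¬ ψ a ∧ UntilPath (fun _ => True) ψ a l := by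
  constructor
  · rintro (h | ⟨hψ, -, h⟩)
    exacts [Or.inl ⟨h, rfl⟩, Or.inr ⟨hψ, h⟩]
  · rintro (⟨h, rfl⟩ | ⟨hψ, h⟩)
    exacts [.single h, .cons hψ trivial h]

lemma pathProb_nonneg {p : S → S → ℝ} (hp : ∀ s s', 0 ≤ p s s') :
    ∀ (s : S) (l : List S), 0 ≤ pathProb p s l
  | _, [] => zero_le_one
  | s, a :: l => mul_nonneg (hp s a) (pathProb_nonneg hp a l)

lemma Reaches.mem_of_closed {p : S → S → ℝ} {C : Set S}
    (hC : ∀ a ∈ C, ∀ b, 0 < p a b → b ∈ C) {a b : S} (h : Reaches p a b) (ha : a ∈ C) :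
    b ∈ C := by
  induction h with
  | refl => exact ha
  | tail _ hstep ih => exact hC _ ih _ hstep

lemma reachProb_eq_one {p : S → S → ℝ} {ψ : S → Prop} {s : S} (h : ψ s) :
    reachProb p ψ s = 1 :=
  if_pos h

variable [Fintype S]

lemma sum_p_eq_one (M : MC S A) (s : S) : ∑ s', M.p s s' = 1 := by
  rw [← finsum_eq_sum_of_fintype]
  exact M.sum_one s

noncomputable def untilIter (p : S → S → ℝ) (ψ : S → Prop) : ℕ → S → ℝ
  | 0 => fun _ => 0
  | n + 1 => fun s => ∑ s', p s s' * if ψ s' then 1 else untilIter p ψ n s'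

noncomputable def untilPaths (ψ : S → Prop) : ℕ → Finset (List S)
  | 0 => ∅
  | n + 1 => Finset.univ.biUnion fun a =>
      (if ψ a then {[]} else untilPaths ψ n).image (a :: ·)

lemma cons_mem_untilPaths_succ {ψ : S → Prop} {n : ℕ} {a : S} {l : List S} :
    a :: l ∈ untilPaths ψ (n + 1) ↔ l ∈ if ψ a then {[]} else untilPaths ψ n := by
  simp [untilPaths]

lemma mem_untilPaths {ψ : S → Prop} (s : S) :
    ∀ {n : ℕ} {l : List S},
      l ∈ untilPaths ψ n ↔ UntilPath (fun _ => True) ψ s l ∧ l.length ≤ n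
  | 0, l => by
    simp only [untilPaths, Finset.notMem_empty, false_iff, not_and, Nat.le_zero,
      List.length_eq_zero_iff]
    rintro h rfl
    exact not_untilPath_nil h
  | n + 1, [] => by simp [untilPaths, not_untilPath_nil]
  | n + 1, a :: l => by
    rw [cons_mem_untilPaths_succ, untilPath_cons_iff]
    split_ifs with hψ
    · simp +contextual [hψ]
    · simp [hψ, mem_untilPaths a]

lemma sum_untilPaths_succ {ψ : S → Prop} {n : ℕ} (f : List S → ℝ) :
    ∑ l ∈ untilPaths ψ (n + 1), f l =
      ∑ a, ∑ l ∈ (if ψ a then {[]} else untilPaths ψ n), f (a :: l) := by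
  rw [untilPaths, Finset.sum_biUnion]
  · simp_rw [Finset.sum_image fun _ _ _ _ h => List.cons_injective h]
  · intro a _ b _ hab
    simp only [Function.onFun, Finset.disjoint_left, Finset.mem_image]
    rintro _ ⟨l, -, rfl⟩ ⟨l', -, h⟩
    exact hab (List.cons_eq_cons.1 h).1.symm

lemma untilIter_eq_sum_untilPaths (p : S → S → ℝ) (ψ : S → Prop) :
    ∀ (n : ℕ) (s : S), untilIter p ψ n s = ∑ l ∈ untilPaths ψ n, pathProb p s l
  | 0, s => rfl
  | n + 1, s => by
    rw [sum_untilPaths_succ, untilIter]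
    refine Finset.sum_congr rfl fun a _ => ?_
    split_ifs
    · simp [pathProb]
    · simp [pathProb, untilIter_eq_sum_untilPaths p ψ n a, Finset.mul_sum]

variable (M : MC S A) (ψ : S → Prop)

lemma untilIter_nonneg : ∀ (n : ℕ) (s : S), 0 ≤ untilIter M.p ψ n s
  | 0, _ => le_rfl
  | n + 1, s => Finset.sum_nonneg fun a _ => mul_nonneg (M.nonneg s a) <| by
      split_ifs
      exacts [zero_le_one, untilIter_nonneg n a]

lemma untilIter_le_one : ∀ (n : ℕ) (s : S), untilIter M.p ψ n s ≤ 1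
  | 0, _ => zero_le_one
  | n + 1, s => by
    calc untilIter M.p ψ (n + 1) s ≤ ∑ a, M.p s a * 1 := by
          refine Finset.sum_le_sum fun a _ => mul_le_mul_of_nonneg_left ?_ (M.nonneg s a)
          split_ifs
          exacts [le_rfl, untilIter_le_one n a]
      _ = 1 := by simp [sum_p_eq_one]

lemma tendsto_untilIter (s : S) :
    Tendsto (fun n => untilIter M.p ψ n s) atTop
      (𝓝 (untilProb M.p (fun _ => True) ψ s)) := by
  set P := UntilPath (fun _ => True) ψ s
  have hsum : ∀ n,
      ∑ l ∈ (untilPaths ψ n).subtype P, pathProb M.p s l = untilIter M.p ψ n s := fun n => by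
    rw [Finset.sum_subtype_eq_sum_filter, untilIter_eq_sum_untilPaths,
        Finset.filter_true_of_mem fun l hl => ((mem_untilPaths s).1 hl).1]
  have hsummable : Summable fun l : Subtype P => pathProb M.p s l := by
    refine summable_of_sum_le (c := 1) (fun l => pathProb_nonneg M.nonneg s l) fun F => ?_
    calc ∑ l ∈ F, pathProb M.p s l
        ≤ ∑ l ∈ (untilPaths ψ (F.sup fun l => l.1.length)).subtype P, pathProb M.p s l := by
          refine Finset.sum_le_sum_of_subset_of_nonneg (fun l hl => ?_)
            fun l _ _ => pathProb_nonneg M.nonneg s l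
          exact Finset.mem_subtype.2 <| (mem_untilPaths s).2
            ⟨l.2, Finset.le_sup (f := fun l : Subtype P => l.1.length) hl⟩
      _ ≤ 1 := (hsum _).trans_le (untilIter_le_one M ψ _ s)
  have hmono : Monotone fun n => (untilPaths ψ n).subtype P := by
    intro m n hmn l hl
    rw [Finset.mem_subtype, mem_untilPaths s] at hl ⊢
    exact ⟨hl.1, hl.2.trans hmn⟩
  have hexh : ∀ l : Subtype P, ∃ n, l ∈ (untilPaths ψ n).subtype P := fun l =>
    ⟨l.1.length, Finset.mem_subtype.2 <| (mem_untilPaths s).2 ⟨l.2, le_rfl⟩⟩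
  have := hsummable.hasSum.comp (tendsto_atTop_finset_of_monotone hmono hexh)
  simp only [Function.comp_def, hsum] at this
  exact this

lemma tendsto_reachProb (s : S) :
    Tendsto (fun n => if ψ s then 1 else untilIter M.p ψ n s) atTop
      (𝓝 (reachProb M.p ψ s)) := by
  by_cases h : ψ s <;> simp [reachProb, h, tendsto_untilIter]

lemma reachProb_nonneg (s : S) : 0 ≤ reachProb M.p ψ s :=
  ge_of_tendsto' (tendsto_reachProb M ψ s) fun n => by
    split_ifs
    exacts [zero_le_one, untilIter_nonneg M ψ n s]

lemma reachProb_le_one (s : S) : reachProb M.p ψ s ≤ 1 :=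
  le_of_tendsto' (tendsto_reachProb M ψ s) fun n => by
    split_ifs
    exacts [le_rfl, untilIter_le_one M ψ n s]

lemma reachProb_eq_sum {s : S} (hs : ¬ ψ s) :
    reachProb M.p ψ s = ∑ s', M.p s s' * reachProb M.p ψ s' := by
  have h := (tendsto_reachProb M ψ s).comp (tendsto_add_atTop_nat 1)
  simp only [Function.comp_def, hs, if_false] at h
  exact tendsto_nhds_unique h <|
    tendsto_finsetSum _ fun a _ => (tendsto_reachProb M ψ a).const_mul _

lemma reachProb_le_of_superharmonic {w : S → ℝ} (hw0 : ∀ s, 0 ≤ w s)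
    (hw1 : ∀ s, ψ s → 1 ≤ w s) (hw : ∀ s, ¬ ψ s → ∑ s', M.p s s' * w s' ≤ w s)
    (s : S) :
    reachProb M.p ψ s ≤ w s := by
  have key : ∀ n s, (if ψ s then 1 else untilIter M.p ψ n s) ≤ w s := by
    intro n
    induction n with
    | zero => intro s; split_ifs with h; exacts [hw1 s h, hw0 s]
    | succ n ih =>
      intro s
      split_ifs with h
      · exact hw1 s h
      · exact (Finset.sum_le_sum fun a _ =>
          mul_le_mul_of_nonneg_left (ih a) (M.nonneg s a)).trans (hw s h)
  exact le_of_tendsto' (tendsto_reachProb M ψ s) fun n => key n s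

lemma reachProb_eq_zero_of_closed {C : Set S}
    (hC : ∀ s ∈ C, ¬ ψ s ∧ ∀ s', 0 < M.p s s' → s' ∈ C) {s : S} (hs : s ∈ C) :
    reachProb M.p ψ s = 0 := by
  have key : ∀ n, ∀ s ∈ C, untilIter M.p ψ n s = 0 := by
    intro n
    induction n with
    | zero => exact fun _ _ => rfl
    | succ n ih =>
      refine fun s hs => Finset.sum_eq_zero fun a _ => ?_
      rcases (M.nonneg s a).eq_or_lt with h | h
      · rw [← h, zero_mul]
      · have ha := (hC s hs).2 a h
        rw [if_neg (hC a ha).1, ih a ha, mul_zero]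
  rw [reachProb, if_neg (hC s hs).1]
  exact tendsto_nhds_unique (tendsto_untilIter M ψ s)
    (tendsto_const_nhds.congr fun n => (key n s hs).symm)

lemma le_reachProb_of_subharmonic {f : S → ℝ} (hf1 : ∀ s, f s ≤ 1)
    (hf : ∀ s, ¬ ψ s → f s ≤ ∑ s', M.p s s' * f s')
    (hreach : ∀ s, 0 < f s → ∃ s', Reaches M.p s s' ∧ ψ s') (s : S) :
    f s ≤ reachProb M.p ψ s := by
  by_contra! hlt
  set g := fun s => f s - reachProb M.p ψ s
  obtain ⟨s₁, -, hmax⟩ := Finset.exists_max_image Finset.univ g ⟨s, Finset.mem_univ s⟩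
  have hpos : 0 < g s₁ := (sub_pos.2 hlt).trans_le (hmax s (Finset.mem_univ s))
  -- The maximisers of `f - reachProb` form a closed set without `ψ`-states.
  have hD : ∀ x, g x = g s₁ → ¬ ψ x ∧ ∀ x', 0 < M.p x x' → g x' = g s₁ := by
    intro x hx
    have hψ : ¬ ψ x := fun h => by
      have : g x ≤ 0 := by simp [g, reachProb_eq_one h, hf1 x]
      linarith
    refine ⟨hψ, fun x' hx' => eq_of_le_sum_mul (M.nonneg x) (M.sum_p_eq_one x)
      (fun y _ => hmax y (Finset.mem_univ y)) ?_ hx'⟩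
    calc g s₁ = f x - reachProb M.p ψ x := hx.symm
      _ ≤ ∑ y, M.p x y * f y - ∑ y, M.p x y * reachProb M.p ψ y := by
        rw [← reachProb_eq_sum M ψ hψ]; linarith [hf x hψ]
      _ = ∑ y, M.p x y * g y := by simp only [g, mul_sub, Finset.sum_sub_distrib]
  obtain ⟨s', hs', hψ'⟩ := hreach s₁ (by linarith [reachProb_nonneg M ψ s₁])
  exact (hD s' (hs'.mem_of_closed (C := {x | g x = g s₁}) (fun x hx => (hD x hx).2) rfl)).1 hψ'

noncomputable def preachAt (M : MC S A) (α : Set A) (s : S) : ℝ :=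
  reachProb M.p (fun s => M.V s = α) s

end MC

namespace IsSatRel

variable {S T A : Type} {M' : MC T A} {I : IMC S A} {R : T → S → Prop} {t : T} {s : S}

lemma preachAt_eq_one_of_rel (hR : IsSatRel M' I R) {α : Set A} (h : R t s) (hs : I.V s = α) :
    M'.preachAt α t = 1 :=
  MC.reachProb_eq_one ((hR.2 t s h).1.trans hs)

variable [Fintype T]

lemma preachAt_eq_sum_of_rel (hR : IsSatRel M' I R) {α : Set A} (h : R t s) (hs : ¬ I.V s = α) :
    M'.preachAt α t = ∑ t', M'.p t t' * M'.preachAt α t' :=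
  MC.reachProb_eq_sum M' _ fun ht => hs ((hR.2 t s h).1.symm.trans ht)

noncomputable def corr (hR : IsSatRel M' I R) (t : T) (s : S) : T → S → ℝ :=
  if h : R t s then (hR.2 t s h).2.choose else 0

noncomputable def row (hR : IsSatRel M' I R) (t : T) (s s' : S) : ℝ :=
  ∑ t', M'.p t t' * hR.corr t s t' s'

/-- The states from which `α` is reached within `k` steps using only rows of pairs `(t, s)`
in which `t` has the largest value among the states related to `s`. -/
def level (hR : IsSatRel M' I R) (α : Set A) : ℕ → Set S
  | 0 => {s | I.V s = α}
  | k + 1 => hR.level α k ∪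
      {s | ∃ t, R t s ∧ (∀ t', R t' s → M'.preachAt α t' ≤ M'.preachAt α t) ∧
        ∃ s', 0 < hR.row t s s' ∧ s' ∈ hR.level α k}

variable (hR : IsSatRel M' I R)

lemma exists_max_rel_progress (α : Set A) (s : S) :
    ∃ t, (∃ t, R t s) →
      R t s ∧ (∀ t', R t' s → M'.preachAt α t' ≤ M'.preachAt α t) ∧
        ∀ k, s ∈ hR.level α (k + 1) → s ∉ hR.level α k →
          ∃ s', 0 < hR.row t s s' ∧ s' ∈ hR.level α k := by
  have : Nonempty T := ⟨M'.s0⟩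
  refine exists_imp_of_nonempty fun h => ?_
  have hmono : Monotone (hR.level α) := monotone_nat_of_le_succ fun _ => Set.subset_union_left
  by_cases hk : ∃ k, s ∈ hR.level α (k + 1) ∧ s ∉ hR.level α k
  · obtain ⟨k, hk1, hk0⟩ := hk
    obtain ⟨t, ht, hmax, hprog⟩ := hk1.resolve_left hk0
    refine ⟨t, ht, hmax, fun j hj1 hj0 => ?_⟩
    obtain rfl : j = k := by
      by_contra hne
      rcases Nat.lt_or_gt_of_ne hne with hlt | hlt
      · exact hk0 (hmono hlt hj1)
      · exact hj0 (hmono hlt hk1)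
    exact hprog
  · push Not at hk
    obtain ⟨t, ht, hmax⟩ := Set.exists_max_image {t | R t s} (M'.preachAt α) (Set.toFinite _) h
    exact ⟨t, ht, hmax, fun k h1 h0 => absurd (hk k h1) h0⟩

variable [Fintype S]

lemma corr_spec (h : R t s) :
    (∀ t' s', 0 ≤ hR.corr t s t' s') ∧
    (∀ t', 0 < M'.p t t' → ∑ s', hR.corr t s t' s' = 1) ∧
    (∀ s', ∑ t', M'.p t t' * hR.corr t s t' s' ∈ Set.Icc (I.Plo s s') (I.Phi s s')) ∧
    ∀ t' s', 0 < hR.corr t s t' s' → R t' s' := by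
  rw [corr, dif_pos h]
  obtain ⟨h0, h1, h2, h3⟩ := (hR.2 t s h).2.choose_spec
  simp only [finsum_eq_sum_of_fintype] at h1 h2
  exact ⟨h0, h1, h2, h3⟩

lemma corr_nonneg (h : R t s) (t' : T) (s' : S) : 0 ≤ hR.corr t s t' s' :=
  (hR.corr_spec h).1 t' s'

lemma sum_corr (h : R t s) {t' : T} (hp : 0 < M'.p t t') : ∑ s', hR.corr t s t' s' = 1 :=
  (hR.corr_spec h).2.1 t' hp

lemma rel_of_corr_pos (h : R t s) {t' : T} {s' : S} (hδ : 0 < hR.corr t s t' s') : R t' s' :=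
  (hR.corr_spec h).2.2.2 t' s' hδ

lemma row_nonneg (h : R t s) (s' : S) : 0 ≤ hR.row t s s' :=
  Finset.sum_nonneg fun t' _ => mul_nonneg (M'.nonneg t t') (hR.corr_nonneg h t' s')

lemma row_mem_Icc (h : R t s) (s' : S) : hR.row t s s' ∈ Set.Icc (I.Plo s s') (I.Phi s s') :=
  (hR.corr_spec h).2.2.1 s'

lemma exists_rel_of_row_pos (h : R t s) {s' : S} (hpos : 0 < hR.row t s s') :
    ∃ t', R t' s' := by
  obtain ⟨t', -, ht'⟩ := Finset.exists_lt_of_sum_lt (s := Finset.univ)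
    (by simpa [row] using hpos : ∑ t', (0 : ℝ) < ∑ t', M'.p t t' * hR.corr t s t' s')
  exact ⟨t', hR.rel_of_corr_pos h (pos_of_mul_pos_right ht' (M'.nonneg t t'))⟩

lemma exists_row_pos_of_p_pos (h : R t s) {t' : T} (hp : 0 < M'.p t t') :
    ∃ s', R t' s' ∧ 0 < hR.row t s s' := by
  obtain ⟨s', -, hs'⟩ := Finset.exists_lt_of_sum_lt (s := Finset.univ)
    (by simp [hR.sum_corr h hp] : ∑ s', (0 : ℝ) < ∑ s', hR.corr t s t' s')
  refine ⟨s', hR.rel_of_corr_pos h hs', (mul_pos hp hs').trans_le ?_⟩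
  exact Finset.single_le_sum (f := fun t'' => M'.p t t'' * hR.corr t s t'' s')
    (fun t'' _ => mul_nonneg (M'.nonneg t t'') (hR.corr_nonneg h t'' s')) (Finset.mem_univ t')

lemma sum_row_mul_le (h : R t s) {f : T → ℝ} {w : S → ℝ}
    (hfw : ∀ t' s', R t' s' → w s' ≤ f t') :
    ∑ s', hR.row t s s' * w s' ≤ ∑ t', M'.p t t' * f t' := by
  calc ∑ s', hR.row t s s' * w s'
      = ∑ t', M'.p t t' * ∑ s', hR.corr t s t' s' * w s' := by
        simp only [row, Finset.sum_mul, Finset.mul_sum, mul_assoc]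
        exact Finset.sum_comm
    _ ≤ ∑ t', M'.p t t' * f t' := Finset.sum_le_sum fun t' _ =>
        mul_le_mul_of_pos_imp (M'.nonneg t t') fun hp => by
          calc ∑ s', hR.corr t s t' s' * w s' ≤ ∑ s', hR.corr t s t' s' * f t' :=
                Finset.sum_le_sum fun s' _ => mul_le_mul_of_pos_imp
                  (hR.corr_nonneg h t' s') fun hδ => hfw t' s' (hR.rel_of_corr_pos h hδ)
            _ = f t' := by rw [← Finset.sum_mul, hR.sum_corr h hp, one_mul]

lemma le_sum_row_mul (h : R t s) {f : T → ℝ} {w : S → ℝ}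
    (hfw : ∀ t' s', R t' s' → f t' ≤ w s') :
    ∑ t', M'.p t t' * f t' ≤ ∑ s', hR.row t s s' * w s' := by
  have := hR.sum_row_mul_le h (f := -f) (w := -w) fun t' s' h' => neg_le_neg (hfw t' s' h')
  simpa only [Pi.neg_apply, mul_neg, Finset.sum_neg_distrib, neg_le_neg_iff] using this

lemma sum_row (h : R t s) : ∑ s', hR.row t s s' = 1 := by
  have hle := hR.sum_row_mul_le h (f := 1) (w := 1) fun _ _ _ => le_rfl
  have hge := hR.le_sum_row_mul h (f := 1) (w := 1) fun _ _ _ => le_rfl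
  simp only [Pi.one_apply, mul_one, M'.sum_p_eq_one] at hle hge
  exact hle.antisymm hge

noncomputable def collapse (sel : S → T) (hsel : ∀ s, (∃ t, R t s) → R (sel s) s) :
    MC S A where
  s0 := I.s0
  p s := if ∃ t, R t s then hR.row (sel s) s else fun s' => if s' = s then 1 else 0
  nonneg s s' := by
    split_ifs with h
    · exact hR.row_nonneg (hsel s h) s'
    · positivity
  sum_one s := by
    rw [finsum_eq_sum_of_fintype]
    split_ifs with h
    · exact hR.sum_row (hsel s h)
    · simp
  V := I.V

variable {sel : S → T} {hsel : ∀ s, (∃ t, R t s) → R (sel s) s}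

lemma collapse_p_of_rel (h : ∃ t, R t s) :
    (hR.collapse sel hsel).p s = hR.row (sel s) s :=
  if_pos h

lemma collapse_p_of_not_rel (h : ¬ ∃ t, R t s) :
    (hR.collapse sel hsel).p s = fun s' => if s' = s then 1 else 0 :=
  if_neg h

lemma satO_collapse : SatO (hR.collapse sel hsel) I := by
  refine ⟨rfl, rfl, fun s hs s' => ?_⟩
  have h : ∃ t, R t s := hs.mem_of_closed (C := {s | ∃ t, R t s})
    (fun a ha b hab => hR.exists_rel_of_row_pos (hsel a ha) <| by
      rwa [hR.collapse_p_of_rel ha] at hab)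
    ⟨M'.s0, hR.1⟩
  rw [hR.collapse_p_of_rel h]
  exact hR.row_mem_Icc (hsel s h) s'

theorem exists_satO_preach_le (hR : IsSatRel M' I R) (α : Set A) :
    ∃ M : MC S A, SatO M I ∧ M.Preach α ≤ M'.Preach α := by
  set v := M'.preachAt α
  have : Nonempty T := ⟨M'.s0⟩
  have : ∀ s, ∃ t, (∃ t, R t s) → R t s ∧ ∀ t', R t' s → v t ≤ v t' := fun s =>
    exists_imp_of_nonempty fun h => Set.exists_min_image {t | R t s} v (Set.toFinite _) h
  choose sel hsel using this
  set M := hR.collapse sel fun s h => (hsel s h).1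
  -- The least value of `M'` over the states related to `s` is superharmonic for `M`.
  set w := fun s => if ∃ t, R t s then v (sel s) else 1
  have hw : ∀ s, MC.reachProb M.p (fun s => I.V s = α) s ≤ w s := by
    refine MC.reachProb_le_of_superharmonic M _ (fun s => ?_) (fun s hs => ?_) fun s hs => ?_
    · dsimp only [w]
      split_ifs
      exacts [MC.reachProb_nonneg M' _ _, zero_le_one]
    · dsimp only [w]
      split_ifs with h
      exacts [(hR.preachAt_eq_one_of_rel (hsel s h).1 hs).ge, le_rfl]
    · by_cases h : ∃ t, R t s
      · rw [hR.collapse_p_of_rel h]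
        calc ∑ s', hR.row (sel s) s s' * w s'
            ≤ ∑ t', M'.p (sel s) t' * v t' :=
              hR.sum_row_mul_le (hsel s h).1 fun t' s' h' => by
                simpa [w, show ∃ t, R t s' from ⟨t', h'⟩] using (hsel s' ⟨t', h'⟩).2 t' h'
          _ = w s := by simp [w, h, v, hR.preachAt_eq_sum_of_rel (hsel s h).1 hs]
      · rw [hR.collapse_p_of_not_rel h]
        simp
  have hs0 : ∃ t, R t I.s0 := ⟨M'.s0, hR.1⟩
  refine ⟨M, hR.satO_collapse, ?_⟩
  calc M.Preach α ≤ w I.s0 := hw I.s0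
    _ = v (sel I.s0) := if_pos hs0
    _ ≤ M'.Preach α := (hsel _ hs0).2 _ hR.1

lemma exists_mem_level {α : Set A} (h : R t s) (hpos : 0 < M'.preachAt α t) :
    ∃ k, s ∈ hR.level α k := by
  by_contra! hs
  set v := M'.preachAt α
  set C := {t' | ∃ x, (∀ k, x ∉ hR.level α k) ∧ R t' x}
  obtain ⟨t₁, ht₁, hmax⟩ := Set.exists_max_image C v (Set.toFinite C) ⟨t, s, hs, h⟩
  have hstep : ∀ t' ∈ C, v t' = v t₁ →
      ¬ M'.V t' = α ∧ ∀ t'', 0 < M'.p t' t'' → t'' ∈ C := by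
    rintro t' ⟨x, hx, hRx⟩ hv
    refine ⟨fun hα => hx 0 ((hR.2 t' x hRx).1.symm.trans hα), fun t'' hp => ?_⟩
    obtain ⟨y, hRy, hrow⟩ := hR.exists_row_pos_of_p_pos hRx hp
    refine ⟨y, fun k hy => hx (k + 1) (Or.inr ⟨t', hRx, fun u hu => ?_, y, hrow, hy⟩), hRy⟩
    exact (hmax u ⟨x, hx, hu⟩).trans hv.ge
  -- The maximisers of `v` in `C` form a closed set of `M'` avoiding `α`.
  set D := {t' | t' ∈ C ∧ v t' = v t₁}
  have hclosed : ∀ t' ∈ D, ¬ M'.V t' = α ∧ ∀ t'', 0 < M'.p t' t'' → t'' ∈ D := by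
    rintro t' ⟨hC, hv⟩
    obtain ⟨hα, hsucc⟩ := hstep t' hC hv
    refine ⟨hα, fun t'' hp => ⟨hsucc t'' hp, ?_⟩⟩
    refine eq_of_le_sum_mul (M'.nonneg t') (M'.sum_p_eq_one t')
      (fun u hu => hmax u (hsucc u hu)) ?_ hp
    exact (hv.symm.trans (MC.reachProb_eq_sum M' _ hα)).le
  have hzero : v t₁ = 0 := MC.reachProb_eq_zero_of_closed M' _ hclosed ⟨ht₁, rfl⟩
  linarith [hmax t ⟨s, hs, h⟩]

theorem exists_satO_le_preach (hR : IsSatRel M' I R) (α : Set A) :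
    ∃ M : MC S A, SatO M I ∧ M'.Preach α ≤ M.Preach α := by
  set v := M'.preachAt α
  choose sel hsel using hR.exists_max_rel_progress α
  set M := hR.collapse sel fun s h => (hsel s h).1
  have hreach : ∀ k, ∀ s ∈ hR.level α k, ∃ s', MC.Reaches M.p s s' ∧ I.V s' = α := by
    intro k
    induction k with
    | zero => exact fun s hs => ⟨s, .refl, hs⟩
    | succ k ih =>
      intro s hs
      by_cases hk : s ∈ hR.level α k
      · exact ih s hk
      · have h : ∃ t, R t s := (hs.resolve_left hk).imp fun _ ht => ht.1
        obtain ⟨s', hpos, hs'⟩ := (hsel s h).2.2 k hs hk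
        obtain ⟨s'', hs'', hα⟩ := ih s' hs'
        exact ⟨s'', .head (by rwa [hR.collapse_p_of_rel h]) hs'', hα⟩
  -- The greatest value of `M'` over the states related to `s` is subharmonic for `M`.
  set f := fun s => if ∃ t, R t s then v (sel s) else 0
  have hf : ∀ s, f s ≤ MC.reachProb M.p (fun s => I.V s = α) s := by
    refine MC.le_reachProb_of_subharmonic M _ (fun s => ?_) (fun s hs => ?_) fun s hs => ?_
    · dsimp only [f]
      split_ifs
      exacts [MC.reachProb_le_one M' _ _, zero_le_one]
    · by_cases h : ∃ t, R t s
      · rw [hR.collapse_p_of_rel h]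
        calc f s = ∑ t', M'.p (sel s) t' * v t' := by
              simp [f, h, v, hR.preachAt_eq_sum_of_rel (hsel s h).1 hs]
          _ ≤ ∑ s', hR.row (sel s) s s' * f s' :=
              hR.le_sum_row_mul (hsel s h).1 fun t' s' h' => by
                simpa [f, show ∃ t, R t s' from ⟨t', h'⟩] using
                  (hsel s' ⟨t', h'⟩).2.1 t' h'
      · rw [hR.collapse_p_of_not_rel h]
        simp
    · have h : ∃ t, R t s := by
        by_contra h
        simp [f, h] at hs
      simp only [f, h, if_true] at hs
      obtain ⟨k, hk⟩ := hR.exists_mem_level (hsel s h).1 hs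
      exact hreach k s hk
  have hs0 : ∃ t, R t I.s0 := ⟨M'.s0, hR.1⟩
  refine ⟨M, hR.satO_collapse, ?_⟩
  calc M'.Preach α ≤ v (sel I.s0) := (hsel _ hs0).2.1 _ hR.1
    _ = f I.s0 := (if_pos hs0).symm
    _ ≤ M.Preach α := hf I.s0

end IsSatRel

theorem SatO.satA {S A : Type} {M : MC S A} {I : IMC S A} (h : SatO M I) : SatA M I := by
  obtain ⟨hs0, hV, hIcc⟩ := h
  set R := fun t s => t = s ∧ MC.Reaches M.p M.s0 t
  refine ⟨R, ⟨hs0, .refl⟩, ?_⟩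
  rintro t s ⟨rfl, ht⟩
  refine ⟨congrFun hV t, fun t' s' => if R t' s' then 1 else 0, fun _ _ => by positivity,
    fun t' hp => ?_, fun s' => ?_, fun t' s' h => ?_⟩
  · rw [finsum_eq_single _ t' fun s' hs' => if_neg fun h => hs' h.1.symm]
    exact if_pos ⟨rfl, ht.tail hp⟩
  · have hsum : ∑ᶠ t', M.p t t' * (if R t' s' then 1 else 0) = M.p t s' := by
      rw [finsum_eq_single _ s' fun t' ht' => by simp [R, ht']]
      by_cases hs' : MC.Reaches M.p M.s0 s'
      · simp [R, hs']
      · have hp : M.p t s' = 0 :=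
          ((M.nonneg t s').eq_or_lt.resolve_right fun hp => hs' (ht.tail hp)).symm
        simp [hp]
    rw [hsum]
    exact hIcc t ht s'
  · by_contra hn
    simp [hn] at h

theorem stmt6_general {S A : Type} [Finite S] (I : IMC S A) (α : Set A)
    (rel : ℝ → ℝ → Prop)
    (hrel : rel = (· ≤ ·) ∨ rel = (· < ·) ∨ rel = (· > ·) ∨ rel = (· ≥ ·))
    (q : ℝ) :
    (∃ M : MC S A, SatO M I ∧ rel (M.Preach α) q) ↔
      ∃ (T : Type) (_ : Finite T) (M' : MC T A), SatA M' I ∧ rel (M'.Preach α) q := by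
  have := Fintype.ofFinite S
  refine ⟨fun ⟨M, hM, hq⟩ => ⟨S, inferInstance, M, hM.satA, hq⟩, ?_⟩
  rintro ⟨T, _, M', ⟨R, hR⟩, hq⟩
  have := Fintype.ofFinite T
  obtain ⟨Mlo, hlo, hle⟩ := hR.exists_satO_preach_le α
  obtain ⟨Mhi, hhi, hge⟩ := hR.exists_satO_le_preach α
  rcases hrel with rfl | rfl | rfl | rfl
  exacts [⟨Mlo, hlo, hle.trans hq⟩, ⟨Mlo, hlo, hle.trans_lt hq⟩,
    ⟨Mhi, hhi, hq.trans_le hge⟩, ⟨Mhi, hhi, hq.trans hge⟩]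

/-- equivalence of the two IMC semantics w.r.t. quantitative
reachability `P(◊α) ~ q` for `~ ∈ {≤, <, >, ≥}` and `0 < q < 1`. -/
theorem stmt6 {S A : Type} [Finite S] (I : IMC S A) (α : Set A)
    (rel : ℝ → ℝ → Prop)
    (hrel : rel = (· ≤ ·) ∨ rel = (· < ·) ∨ rel = (· > ·) ∨ rel = (· ≥ ·))
    (q : ℝ) (hq0 : 0 < q) (hq1 : q < 1) :
    (∃ M : MC S A, SatO M I ∧ rel (M.Preach α) q) ↔
      ∃ (T : Type) (_ : Finite T) (M' : MC T A), SatA M' I ∧ rel (M'.Preach α) q :=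
  stmt6_general I α rel hrel q
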